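/- Let ν ∈ (0,1), let w(x) = 2(1−ν)x on [0,ν] and w(x) = 2ν(1−x) on [ν,1]. For every continuous function P on [0,1] which is a polynomial of degree ≤ p on [0,ν] and a polynomial of degree ≤ p on [ν,1], there exist unique coefficients α₀,…,α_p and β₀,…,β_p with β_p = 0 such that P(x) = Σ_{j=0}^{p} (α_j x^j + β_j w(x) x^j) for all x ∈ [0,1]. -/

import Mathlib

/-!
Write `L = 2(1-ν)X` and `M = 2ν(1-X)` for the two linear pieces of `w`, and `A`, `B` for the two
polynomial pieces of `P`. Since polynomials agreeing on an interval are equal, a representation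
`P = Q + w R` on `[0,1]` is the same as the pair of polynomial identities `A = Q + L R`,
`B = Q + M R`. Subtracting them gives `A - B = (L - M) R = 2 (X - ν) R`: since
`A(ν) = P(ν) = B(ν)`, `X - ν` divides `A - B`, so `R = (A - B) / (2 (X - ν))` exists, has degree `< p` (whence
`β_p = 0`), and is unique; then `Q = A - L R` is forced as well.
-/

open Polynomial Set

namespace Polynomial

variable {K : Type*}

theorem eval_ofFn [CommSemiring K] [DecidableEq K] {n : ℕ} (v : Fin n → K) (x : K) :
    (ofFn n v).eval x = ∑ j : Fin n, v j * x ^ (j : ℕ) := by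
  simp [ofFn_eq_sum_monomial, eval_finsetSum]

theorem eval_ofFn_eq_sum_range [CommSemiring K] [DecidableEq K] {n : ℕ} (a : ℕ → K) (x : K) :
    (ofFn n fun j : Fin n => a j).eval x = ∑ l ∈ Finset.range n, a l * x ^ l := by
  rw [eval_ofFn, Fin.sum_univ_eq_sum_range fun l => a l * x ^ l]

theorem sum_fin_add_mul_eq_eval_ofFn [CommSemiring K] [DecidableEq K] {n : ℕ}
    (u v : Fin n → K) (x y : K) :
    ∑ j : Fin n, (u j * x ^ (j : ℕ) + v j * y * x ^ (j : ℕ)) =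
      (ofFn n u).eval x + y * (ofFn n v).eval x := by
  rw [eval_ofFn, eval_ofFn, Finset.sum_add_distrib, Finset.mul_sum]
  exact congrArg _ (Finset.sum_congr rfl fun j _ => by ring)

theorem eq_of_forall_mem_Icc_eval_eq {a b : ℝ} (hab : a < b) {F G : ℝ[X]}
    (h : ∀ x ∈ Icc a b, F.eval x = G.eval x) : F = G :=
  eq_of_infinite_eval_eq F G ((Icc_infinite hab).mono h)

theorem exists_eq_add_mul_and_eq_add_mul [Field K] {L M : K[X]} {k ν : K} (hk : k ≠ 0)
    (hLM : L - M = C k * (X - C ν)) (hL : L.natDegree ≤ 1) {p : ℕ} (hp : 1 ≤ p) {A B : K[X]}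
    (hA : A.natDegree ≤ p) (hB : B.natDegree ≤ p) (hAB : A.eval ν = B.eval ν) :
    ∃ Q R : K[X], Q.natDegree ≤ p ∧ R.natDegree < p ∧ A = Q + L * R ∧ B = Q + M * R := by
  set D := (A - B) /ₘ (X - C ν)
  have hD : (X - C ν) * D = A - B := mul_divByMonic_eq_iff_isRoot.mpr (by simp [hAB])
  have hLMR : (L - M) * (C k⁻¹ * D) = A - B := by
    rw [hLM, ← hD, mul_mul_mul_comm, ← C_mul, mul_inv_cancel₀ hk, C_1, one_mul]
  have hR : (C k⁻¹ * D).natDegree < p := calc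
    (C k⁻¹ * D).natDegree ≤ D.natDegree := natDegree_C_mul_le _ _
    _ = (A - B).natDegree - 1 := by rw [natDegree_divByMonic _ (monic_X_sub_C ν), natDegree_X_sub_C]
    _ < p := by have := (natDegree_sub_le A B).trans (max_le hA hB); omega
  refine ⟨A - L * (C k⁻¹ * D), C k⁻¹ * D, ?_, hR, by ring, by linear_combination hLMR⟩
  calc (A - L * (C k⁻¹ * D)).natDegree ≤ max A.natDegree (L * (C k⁻¹ * D)).natDegree :=
        natDegree_sub_le _ _
    _ ≤ p := max_le hA (natDegree_mul_le.trans (by omega))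

theorem eq_and_eq_of_eq_add_mul [CommRing K] [IsDomain K] {L M A B Q R Q' R' : K[X]}
    (hLM : L ≠ M) (hA : A = Q + L * R) (hB : B = Q + M * R) (hA' : A = Q' + L * R')
    (hB' : B = Q' + M * R') : Q = Q' ∧ R = R' := by
  have h : (L - M) * (R - R') = 0 := by linear_combination hA' - hB' - hA + hB
  have hR : R = R' := sub_eq_zero.1 ((mul_eq_zero.1 h).resolve_left (sub_ne_zero.2 hLM))
  exact ⟨by linear_combination hA' - hA - L * hR, hR⟩

end Polynomial

theorem forall_mem_Icc_eq_eval_add_mul_iff {a b ν : ℝ} (haν : a < ν) (hνb : ν < b)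
    {w P : ℝ → ℝ} {L M A B : ℝ[X]} (hwL : ∀ x ∈ Icc a ν, w x = L.eval x)
    (hwM : ∀ x ∈ Icc ν b, w x = M.eval x) (hA : ∀ x ∈ Icc a ν, P x = A.eval x)
    (hB : ∀ x ∈ Icc ν b, P x = B.eval x) (Q R : ℝ[X]) :
    (∀ x ∈ Icc a b, P x = Q.eval x + w x * R.eval x) ↔ A = Q + L * R ∧ B = Q + M * R := by
  constructor
  · intro h
    refine ⟨eq_of_forall_mem_Icc_eval_eq haν fun x hx => ?_,
      eq_of_forall_mem_Icc_eval_eq hνb fun x hx => ?_⟩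
    · rw [← hA x hx, h x ⟨hx.1, hx.2.trans hνb.le⟩, hwL x hx, eval_add, eval_mul]
    · rw [← hB x hx, h x ⟨haν.le.trans hx.1, hx.2⟩, hwM x hx, eval_add, eval_mul]
  · rintro ⟨rfl, rfl⟩ x hx
    rcases le_total x ν with hxν | hνx
    · rw [hA x ⟨hx.1, hxν⟩, hwL x ⟨hx.1, hxν⟩, eval_add, eval_mul]
    · rw [hB x ⟨hνx, hx.2⟩, hwM x ⟨hνx, hx.2⟩, eval_add, eval_mul]

noncomputable def hatLeft (ν : ℝ) : ℝ[X] := C (2 * (1 - ν)) * X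

noncomputable def hatRight (ν : ℝ) : ℝ[X] := C (2 * ν) * (1 - X)

@[simp] theorem eval_hatLeft (ν x : ℝ) : (hatLeft ν).eval x = 2 * (1 - ν) * x := by
  simp [hatLeft]

@[simp] theorem eval_hatRight (ν x : ℝ) : (hatRight ν).eval x = 2 * ν * (1 - x) := by
  simp [hatRight]

theorem hatLeft_sub_hatRight (ν : ℝ) : hatLeft ν - hatRight ν = C 2 * (X - C ν) := by
  simp only [hatLeft, hatRight, map_mul, map_sub, map_one, map_ofNat]
  ring

theorem natDegree_hatLeft_le (ν : ℝ) : (hatLeft ν).natDegree ≤ 1 :=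
  (natDegree_C_mul_le _ _).trans natDegree_X_le

theorem hatLeft_ne_hatRight (ν : ℝ) : hatLeft ν ≠ hatRight ν :=
  sub_ne_zero.1 <| by
    rw [hatLeft_sub_hatRight]; exact mul_ne_zero (C_ne_zero.2 two_ne_zero) (X_sub_C_ne_zero ν)

theorem sgfem_local_interpolant_general (p : ℕ) (hp : 1 ≤ p) (ν : ℝ)
    (hν : ν ∈ Set.Ioo (0:ℝ) 1)
    (w : ℝ → ℝ)
    (hw : ∀ x : ℝ, w x = if x ≤ ν then 2 * (1 - ν) * x else 2 * ν * (1 - x))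
    (P : ℝ → ℝ)
    (a b : ℕ → ℝ)
    (hP0 : ∀ x ∈ Set.Icc (0:ℝ) ν, P x = ∑ l ∈ Finset.range (p+1), a l * x ^ l)
    (hP1 : ∀ x ∈ Set.Icc ν (1:ℝ), P x = ∑ l ∈ Finset.range (p+1), b l * x ^ l) :
    ∃! c : (Fin (p+1) → ℝ) × (Fin (p+1) → ℝ),
      c.2 (Fin.last p) = 0 ∧
      ∀ x ∈ Set.Icc (0:ℝ) 1,
        P x = ∑ j : Fin (p+1), (c.1 j * x ^ (j : ℕ) + c.2 j * w x * x ^ (j : ℕ)) := by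
  set A := ofFn (p + 1) fun j : Fin (p + 1) => a j
  set B := ofFn (p + 1) fun j : Fin (p + 1) => b j
  have hA : ∀ x ∈ Icc 0 ν, P x = A.eval x := by simpa only [A, eval_ofFn_eq_sum_range] using hP0
  have hB : ∀ x ∈ Icc ν 1, P x = B.eval x := by simpa only [B, eval_ofFn_eq_sum_range] using hP1
  have hwL : ∀ x ∈ Icc 0 ν, w x = (hatLeft ν).eval x := fun x hx => by
    rw [hw, if_pos hx.2, eval_hatLeft]
  have hwR : ∀ x ∈ Icc ν 1, w x = (hatRight ν).eval x := fun x hx => by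
    rw [hw, eval_hatRight]
    split_ifs with hxν
    · rw [le_antisymm hxν hx.1]; ring
    · rfl
  have hAB : A.eval ν = B.eval ν := by rw [← hA ν ⟨hν.1.le, le_rfl⟩, ← hB ν ⟨le_rfl, hν.2.le⟩]
  have hrep := forall_mem_Icc_eq_eval_add_mul_iff hν.1 hν.2 hwL hwR hA hB
  obtain ⟨Q, R, hQ, hR, hAQR, hBQR⟩ := exists_eq_add_mul_and_eq_add_mul two_ne_zero
    (hatLeft_sub_hatRight ν) (natDegree_hatLeft_le ν) hp
    (Nat.le_of_lt_succ (ofFn_natDegree_lt (by omega) _))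
    (Nat.le_of_lt_succ (ofFn_natDegree_lt (by omega) _)) hAB
  refine ⟨(toFn (p + 1) Q, toFn (p + 1) R), ⟨coeff_eq_zero_of_natDegree_lt hR, fun x hx => ?_⟩, ?_⟩
  · rw [sum_fin_add_mul_eq_eval_ofFn, ofFn_comp_toFn_eq_id_of_natDegree_lt (by omega),
      ofFn_comp_toFn_eq_id_of_natDegree_lt (by omega)]
    exact (hrep Q R).2 ⟨hAQR, hBQR⟩ x hx
  · rintro ⟨α, β⟩ ⟨-, hαβ⟩
    simp only [sum_fin_add_mul_eq_eval_ofFn] at hαβ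
    obtain ⟨hAαβ, hBαβ⟩ := (hrep _ _).1 hαβ
    obtain ⟨rfl, rfl⟩ := eq_and_eq_of_eq_add_mul (hatLeft_ne_hatRight ν) hAQR hBQR hAαβ hBαβ
    simp only [toFn_comp_ofFn_eq_id]

theorem sgfem_local_interpolant (p : ℕ) (hp : 1 ≤ p) (ν : ℝ)
    (hν : ν ∈ Set.Ioo (0:ℝ) 1)
    (w : ℝ → ℝ)
    (hw : ∀ x : ℝ, w x = if x ≤ ν then 2 * (1 - ν) * x else 2 * ν * (1 - x))
    (P : ℝ → ℝ) (hP : ContinuousOn P (Set.Icc 0 1))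
    (a b : ℕ → ℝ)
    (hP0 : ∀ x ∈ Set.Icc (0:ℝ) ν, P x = ∑ l ∈ Finset.range (p+1), a l * x ^ l)
    (hP1 : ∀ x ∈ Set.Icc ν (1:ℝ), P x = ∑ l ∈ Finset.range (p+1), b l * x ^ l) :
    ∃! c : (Fin (p+1) → ℝ) × (Fin (p+1) → ℝ),
      c.2 (Fin.last p) = 0 ∧
      ∀ x ∈ Set.Icc (0:ℝ) 1,
        P x = ∑ j : Fin (p+1), (c.1 j * x ^ (j : ℕ) + c.2 j * w x * x ^ (j : ℕ)) :=
  sgfem_local_interpolant_general p hp ν hν w hw P a b hP0 hP1
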